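/- arXiv:2508.16141 — 2 statements merged into one kernel-verified Lean document; each statement's English description precedes it below -/
import Mathlib

section
/- Let U be unitary on H and G : K → H an isometry with G†UG Hermitian and G†U²G = I. Suppose λ is an eigenvalue of G†UG with eigenvector φ and |λ| = 1. Then Gφ is an eigenvector of the walk operator W = (2GG† − I)U with eigenvalue λ. -/
/-!
Since `U` and `G` are isometries, `x := UGφ` has the same norm as `φ`, and so does
`G†x = λφ` because `|λ| = 1`. A vector whose norm is preserved by the co-isometry `G†`
lies in the range of `G`, i.e. it is fixed by the projection `GG†`; hence
`W(Gφ) = 2GG†x - x = x = G(G†x) = λGφ`.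
-/

open ContinuousLinearMap

namespace ContinuousLinearMap

variable {𝕜 E F : Type*} [RCLike 𝕜] [NormedAddCommGroup E] [InnerProductSpace 𝕜 E]
  [CompleteSpace E] [NormedAddCommGroup F] [InnerProductSpace 𝕜 F] [CompleteSpace F]

theorem apply_adjoint_apply_eq_self_of_norm_adjoint_apply_eq {G : E →L[𝕜] F}
    (hG : adjoint G ∘L G = 1) {x : F} (hx : ‖adjoint G x‖ = ‖x‖) :
    G (adjoint G x) = x := by
  set y := adjoint G x
  have hGy : ‖G y‖ = ‖y‖ := (norm_map_iff_adjoint_comp_self G).mpr hG y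
  have hinner : RCLike.re (inner 𝕜 x (G y)) = ‖y‖ ^ 2 := by
    rw [← adjoint_inner_left, inner_self_eq_norm_sq]
  -- `GG†` is an orthogonal projection, so `‖x - GG†x‖² = ‖x‖² - ‖G†x‖²`.
  have hsq : ‖x - G y‖ ^ 2 = 0 := by
    rw [@norm_sub_sq 𝕜, hinner, hGy, hx]
    ring
  rw [eq_comm, ← sub_eq_zero, ← norm_eq_zero]
  exact pow_eq_zero_iff two_ne_zero |>.mp hsq

end ContinuousLinearMap

theorem walk_operator_eigenvector_of_abs_eq_one_general
    {p q : ℕ}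
    (U : EuclideanSpace ℂ (Fin p) →L[ℂ] EuclideanSpace ℂ (Fin p))
    (hU : adjoint U ∘L U = 1)
    (G : EuclideanSpace ℂ (Fin q) →L[ℂ] EuclideanSpace ℂ (Fin p))
    (hG : adjoint G ∘L G = 1)
    (lam : ℝ) (hlam : |lam| = 1)
    (φ : EuclideanSpace ℂ (Fin q))
    (heig : (adjoint G ∘L U ∘L G) φ = (lam : ℂ) • φ) :
    ((2 • (G ∘L adjoint G) - 1) ∘L U) (G φ) = (lam : ℂ) • G φ := by
  have heig' : adjoint G (U (G φ)) = (lam : ℂ) • φ := heig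
  have hnorm : ‖adjoint G (U (G φ))‖ = ‖U (G φ)‖ := by
    rw [heig', norm_smul, Complex.norm_real, Real.norm_eq_abs, hlam, one_mul,
      (norm_map_iff_adjoint_comp_self U).mpr hU, (norm_map_iff_adjoint_comp_self G).mpr hG]
  have hfixed := apply_adjoint_apply_eq_self_of_norm_adjoint_apply_eq hG hnorm
  calc ((2 • (G ∘L adjoint G) - 1) ∘L U) (G φ)
      = 2 • G (adjoint G (U (G φ))) - U (G φ) := rfl
    _ = G (adjoint G (U (G φ))) := by rw [hfixed, two_smul, add_sub_cancel_right]
    _ = (lam : ℂ) • G φ := by rw [heig', map_smul]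

/-- **Walk operator spectral structure (|λ| = 1 branch).**
Let `U` be unitary on `H`, `G : K → H` an isometry with `G†UG` Hermitian and
`G†U²G = 1`. If `φ` is an eigenvector of `G†UG` with real eigenvalue `λ` of
modulus one, then `Gφ` is an eigenvector of the walk operator `W = (2GG† − 1)U`
with eigenvalue `λ`. -/
theorem walk_operator_eigenvector_of_abs_eq_one
    {p q : ℕ}
    (U : EuclideanSpace ℂ (Fin p) →L[ℂ] EuclideanSpace ℂ (Fin p))
    (hU : adjoint U ∘L U = 1) (hU' : U ∘L adjoint U = 1)
    (G : EuclideanSpace ℂ (Fin q) →L[ℂ] EuclideanSpace ℂ (Fin p))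
    (hG : adjoint G ∘L G = 1)
    (hHerm : IsSelfAdjoint (adjoint G ∘L U ∘L G))
    (hU2 : adjoint G ∘L (U ∘L U) ∘L G = 1)
    (lam : ℝ) (hlam : |lam| = 1)
    (φ : EuclideanSpace ℂ (Fin q)) (hφ : φ ≠ 0)
    (heig : (adjoint G ∘L U ∘L G) φ = (lam : ℂ) • φ) :
    ((2 • (G ∘L adjoint G) - 1) ∘L U) (G φ) = (lam : ℂ) • G φ :=
  walk_operator_eigenvector_of_abs_eq_one_general U hU G hG lam hlam φ heig
end

section
/- For any angles φ₁, …, φ_l ∈ ℝ and θ ∈ ℝ, define R_φ(θ) = exp(−i(θ/2)(cos φ · X + sin φ · Y)) where X, Y are the Pauli matrices. Then the product U_Φ(θ) = R_{φ_l}(θ)⋯R_{φ₁}(θ) can be written as Op(a,b,c,d) = aI + ibZ + icX + idY where a, b are polynomials in x = cos(θ/2) and c, d are polynomials (times x if l is even) in y = sin(θ/2), all with real coefficients, of degree at most l, and satisfying a² + b² + c² + d² = 1 when evaluated at the corresponding point (after accounting for x²+y²=1). -/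
/-!
Put `x = cos (θ/2)` and `y = sin (θ/2)`. Since `N = cos φ • X + sin φ • Y` squares to `1`, the
exponential series splits into its even and odd parts and `R_φ(θ) = x • 1 - (i y) • N`, i.e.
`pauliOp x 0 (-y cos φ) (-y sin φ)`, where `pauliOp a b c d` is the paper's `Op(a, b, c, d)`.
These matrices multiply like quaternions, so by induction the four coefficients of `U_Φ(θ)` are
forms of degree `l` in `(x, y)`: even in `y` for `a, b` and odd in `y` for `c, d`. On the circle
`x² + y² = 1` an even form is a polynomial of degree `≤ l` in `x`, and an odd form is
`x^[l even]` times a polynomial of degree `≤ l` in `y`. Finally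
`det (pauliOp a b c d) = a² + b² + c² + d²` and every `R_φ(θ)` has determinant `1`.
-/

open Matrix Complex

noncomputable section

/-- Pauli `X`. -/
def PX : Matrix (Fin 2) (Fin 2) ℂ := !![0, 1; 1, 0]
/-- Pauli `Y`. -/
def PY : Matrix (Fin 2) (Fin 2) ℂ := !![0, -Complex.I; Complex.I, 0]
/-- Pauli `Z`. -/
def PZ : Matrix (Fin 2) (Fin 2) ℂ := !![1, 0; 0, -1]

/-- `R_φ(θ) = exp(−i(θ/2)(cos φ · X + sin φ · Y))`. -/
def Rrot (φ θ : ℝ) : Matrix (Fin 2) (Fin 2) ℂ :=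
  NormedSpace.exp
    ((-(Complex.I * ((θ : ℂ) / 2))) •
      (((Real.cos φ : ℂ)) • PX + ((Real.sin φ : ℂ)) • PY))

theorem NormedSpace.exp_smul_of_sq_eq_one {𝔸 : Type*} [Ring 𝔸] [Algebra ℂ 𝔸]
    [TopologicalSpace 𝔸] [IsTopologicalRing 𝔸] [T2Space 𝔸] [ContinuousSMul ℂ 𝔸]
    (z : ℂ) {N : 𝔸} (hN : N ^ 2 = 1) :
    NormedSpace.exp (z • N) = cosh z • (1 : 𝔸) + sinh z • N := by
  have hpow (n : ℕ) : N ^ (2 * n) = 1 := by rw [pow_mul, hN, one_pow]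
  rw [NormedSpace.exp_eq_tsum ℂ]
  refine HasSum.tsum_eq (HasSum.even_add_odd ?_ ?_)
  · convert (hasSum_cosh z).smul_const (1 : 𝔸) using 2 with n
    rw [smul_pow, hpow, smul_smul, div_eq_inv_mul]
  · convert (hasSum_sinh z).smul_const N using 2 with n
    rw [smul_pow, pow_succ N, hpow, one_mul, smul_smul, div_eq_inv_mul]

def pauliOp (a b c d : ℝ) : Matrix (Fin 2) (Fin 2) ℂ :=
  (a : ℂ) • 1 + (I * b) • PZ + (I * c) • PX + (I * d) • PY

lemma pauliOp_eq_of (a b c d : ℝ) :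
    pauliOp a b c d = !![a + I * b, I * c + d; I * c - d, a - I * b] := by
  ext i j
  fin_cases i <;> fin_cases j <;> simp [pauliOp, PX, PY, PZ] <;> grind [I_sq]

lemma pauliOp_mul_pauliOp (a b c d a' b' c' d' : ℝ) :
    pauliOp a b c d * pauliOp a' b' c' d' =
      pauliOp (a * a' - b * b' - c * c' - d * d') (a * b' + b * a' - c * d' + d * c')
        (a * c' + c * a' + b * d' - d * b') (a * d' + d * a' - b * c' + c * b') := by
  simp only [pauliOp_eq_of, mul_fin_two]
  ext i j
  fin_cases i <;> fin_cases j <;> simp <;> grind [I_sq]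

lemma det_pauliOp (a b c d : ℝ) :
    (pauliOp a b c d).det = ((a ^ 2 + b ^ 2 + c ^ 2 + d ^ 2 : ℝ) : ℂ) := by
  rw [pauliOp_eq_of, det_fin_two_of]
  push_cast
  linear_combination (-((b : ℂ) ^ 2 + (c : ℂ) ^ 2)) * I_sq

lemma sq_cos_smul_PX_add_sin_smul_PY (φ : ℝ) :
    ((Real.cos φ : ℂ) • PX + (Real.sin φ : ℂ) • PY) ^ 2 = 1 := by
  ext i j
  fin_cases i <;> fin_cases j <;> simp [sq, PX, PY, Matrix.mul_apply, Fin.sum_univ_two] <;>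
    linear_combination Complex.cos_sq_add_sin_sq (φ : ℂ) - sin (φ : ℂ) ^ 2 * I_sq

lemma Rrot_eq_pauliOp (φ θ : ℝ) :
    Rrot φ θ = pauliOp (Real.cos (θ / 2)) 0 (-(Real.sin (θ / 2) * Real.cos φ))
      (-(Real.sin (θ / 2) * Real.sin φ)) := by
  have hz : -(I * ((θ : ℂ) / 2)) = ((-(θ / 2) : ℝ) : ℂ) * I := by push_cast; ring
  rw [Rrot, NormedSpace.exp_smul_of_sq_eq_one _ (sq_cos_smul_PX_add_sin_smul_PY φ), hz,
    cosh_mul_I, sinh_mul_I, ← ofReal_cos, ← ofReal_sin, Real.cos_neg, Real.sin_neg, pauliOp]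
  push_cast
  module

lemma det_Rrot (φ θ : ℝ) : (Rrot φ θ).det = 1 := by
  rw [Rrot_eq_pauliOp, det_pauliOp]
  norm_cast
  linear_combination
    Real.cos_sq_add_sin_sq (θ / 2) + Real.sin (θ / 2) ^ 2 * Real.cos_sq_add_sin_sq φ

open Polynomial

def trigForms (n : ℕ) (e : ZMod 2) : Submodule ℝ (ℝ → ℝ) :=
  Submodule.span ℝ {f | ∃ i j : ℕ, i + j = n ∧ (j : ZMod 2) = e ∧ f = Real.cos ^ i * Real.sin ^ j}

section trigForms

variable {n : ℕ} {e : ZMod 2} {f : ℝ → ℝ}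

lemma cos_mul_mem_trigForms (hf : f ∈ trigForms n e) : Real.cos * f ∈ trigForms (n + 1) e := by
  suffices trigForms n e ≤ (trigForms (n + 1) e).comap (LinearMap.mulLeft ℝ Real.cos) from this hf
  refine Submodule.span_le.mpr ?_
  rintro _ ⟨i, j, hij, hj, rfl⟩
  exact Submodule.subset_span
    ⟨i + 1, j, by omega, hj, by simp only [LinearMap.mulLeft_apply]; ring⟩

lemma sin_mul_mem_trigForms (hf : f ∈ trigForms n e) :
    Real.sin * f ∈ trigForms (n + 1) (e + 1) := by
  suffices trigForms n e ≤ (trigForms (n + 1) (e + 1)).comap (LinearMap.mulLeft ℝ Real.sin) from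
    this hf
  refine Submodule.span_le.mpr ?_
  rintro _ ⟨i, j, hij, rfl, rfl⟩
  exact Submodule.subset_span
    ⟨i, j + 1, by omega, by push_cast; rfl, by simp only [LinearMap.mulLeft_apply]; ring⟩

lemma cos_mul_add_sin_mul_mem_trigForms {A C D : ℝ → ℝ} (hA : A ∈ trigForms n e)
    (hC : C ∈ trigForms n (e + 1)) (hD : D ∈ trigForms n (e + 1)) (u v : ℝ) :
    Real.cos * A + u • (Real.sin * C) + v • (Real.sin * D) ∈ trigForms (n + 1) e := by
  have hsin {F : ℝ → ℝ} (hF : F ∈ trigForms n (e + 1)) : Real.sin * F ∈ trigForms (n + 1) e := by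
    simpa only [CharTwo.add_cancel_right] using sin_mul_mem_trigForms hF
  exact add_mem (add_mem (cos_mul_mem_trigForms hA) (Submodule.smul_mem _ u (hsin hC)))
    (Submodule.smul_mem _ v (hsin hD))

lemma exists_natDegree_le_eq_eval_cos (hf : f ∈ trigForms n 0) :
    ∃ p : ℝ[X], p.natDegree ≤ n ∧ ∀ t, f t = p.eval (Real.cos t) := by
  suffices trigForms n 0 ≤ (degreeLE ℝ n).map (aeval Real.cos).toLinearMap by
    obtain ⟨p, hp, rfl⟩ := this hf
    exact ⟨p, natDegree_le_iff_degree_le.mpr (mem_degreeLE.mp hp), fun t => aeval_fn_apply p _ t⟩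
  refine Submodule.span_le.mpr ?_
  rintro _ ⟨i, j, hij, hj, rfl⟩
  obtain ⟨k, rfl⟩ := (ZMod.natCast_eq_zero_iff_even.mp hj).two_dvd
  refine ⟨X ^ i * (1 - X ^ 2) ^ k, mem_degreeLE.mpr (degree_le_of_natDegree_le ?_), ?_⟩
  · compute_degree
    omega
  · funext t
    simp [pow_mul, Real.sin_sq]

lemma exists_natDegree_le_eq_eval_sin (hf : f ∈ trigForms n 1) :
    ∃ q : ℝ[X], q.natDegree ≤ n ∧ ∀ t, f t =
      if Even n then Real.cos t * q.eval (Real.sin t) else q.eval (Real.sin t) := by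
  suffices trigForms n 1 ≤ (degreeLE ℝ n).map
      (LinearMap.mulLeft ℝ (if Even n then Real.cos else 1) ∘ₗ (aeval Real.sin).toLinearMap) by
    obtain ⟨q, hq, rfl⟩ := this hf
    refine ⟨q, natDegree_le_iff_degree_le.mpr (mem_degreeLE.mp hq), fun t => ?_⟩
    split_ifs <;> simp [aeval_fn_apply]
  refine Submodule.span_le.mpr ?_
  rintro _ ⟨i, j, hij, hj, rfl⟩
  obtain ⟨m, rfl⟩ := ZMod.natCast_eq_one_iff_odd.mp hj
  obtain ⟨k, rfl | rfl⟩ := Nat.even_or_odd' i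
  · have hn : ¬ Even n := by rw [Nat.even_iff]; omega
    refine ⟨(1 - X ^ 2) ^ k * X ^ (2 * m + 1),
      mem_degreeLE.mpr (degree_le_of_natDegree_le (by compute_degree; omega)), ?_⟩
    funext t
    simp [hn, pow_mul, Real.cos_sq']
  · have hn : Even n := by rw [Nat.even_iff]; omega
    refine ⟨(1 - X ^ 2) ^ k * X ^ (2 * m + 1),
      mem_degreeLE.mpr (degree_le_of_natDegree_le (by compute_degree; omega)), ?_⟩
    funext t
    simp only [hn, if_true, LinearMap.comp_apply, AlgHom.coe_toLinearMap, LinearMap.mulLeft_apply,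
      map_mul, map_pow, map_sub, map_one, aeval_X, Pi.mul_apply, Pi.pow_apply, Pi.sub_apply,
      Pi.one_apply, ← Real.cos_sq']
    ring

end trigForms

def qspUnitary {l : ℕ} (φ : Fin l → ℝ) (θ : ℝ) : Matrix (Fin 2) (Fin 2) ℂ :=
  (List.ofFn fun i => Rrot (φ i) θ).reverse.prod

lemma qspUnitary_succ {l : ℕ} (φ : Fin (l + 1) → ℝ) (θ : ℝ) :
    qspUnitary φ θ = Rrot (φ (Fin.last l)) θ * qspUnitary (fun i => φ i.castSucc) θ := by
  rw [qspUnitary, List.ofFn_succ', List.concat_eq_append, List.reverse_append]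
  simp [qspUnitary]

lemma det_qspUnitary {l : ℕ} (φ : Fin l → ℝ) (θ : ℝ) : (qspUnitary φ θ).det = 1 := by
  induction l with
  | zero => simp [qspUnitary]
  | succ l ih => rw [qspUnitary_succ, det_mul, det_Rrot, ih, one_mul]

lemma exists_qspUnitary_eq_pauliOp {l : ℕ} (φ : Fin l → ℝ) :
    ∃ A B C D : ℝ → ℝ, A ∈ trigForms l 0 ∧ B ∈ trigForms l 0 ∧ C ∈ trigForms l 1 ∧
      D ∈ trigForms l 1 ∧
      ∀ θ, qspUnitary φ θ = pauliOp (A (θ / 2)) (B (θ / 2)) (C (θ / 2)) (D (θ / 2)) := by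
  induction l with
  | zero =>
    refine ⟨1, 0, 0, 0, Submodule.subset_span ⟨0, 0, rfl, rfl, by simp⟩, zero_mem _, zero_mem _,
      zero_mem _, fun θ => ?_⟩
    simp [qspUnitary, pauliOp]
  | succ l ih =>
    obtain ⟨A, B, C, D, hA, hB, hC, hD, hU⟩ := ih fun i => φ i.castSucc
    set c := Real.cos (φ (Fin.last l))
    set s := Real.sin (φ (Fin.last l))
    -- `hA`, `hB` also serve as membership in `trigForms l (1 + 1)`: in `ZMod 2`, `1 + 1` is `0`.
    refine ⟨Real.cos * A + c • (Real.sin * C) + s • (Real.sin * D),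
      Real.cos * B + c • (Real.sin * D) + (-s) • (Real.sin * C),
      Real.cos * C + (-c) • (Real.sin * A) + s • (Real.sin * B),
      Real.cos * D + (-s) • (Real.sin * A) + (-c) • (Real.sin * B),
      cos_mul_add_sin_mul_mem_trigForms hA hC hD _ _,
      cos_mul_add_sin_mul_mem_trigForms hB hD hC _ _,
      cos_mul_add_sin_mul_mem_trigForms hC hA hB _ _,
      cos_mul_add_sin_mul_mem_trigForms hD hA hB _ _, fun θ => ?_⟩
    rw [qspUnitary_succ, hU, Rrot_eq_pauliOp, pauliOp_mul_pauliOp]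
    congr 1 <;>
      simp only [Pi.add_apply, Pi.mul_apply, Pi.smul_apply, smul_eq_mul] <;> ring

/-- **Structure of quantum signal processing products.**
For angles `φ₁, …, φ_l`, the product `U_Φ(θ) = R_{φ_l}(θ)⋯R_{φ₁}(θ)` equals
`a(x)·I + i b(x)·Z + i c̃·X + i d̃·Y` where `a, b` are real polynomials in
`x = cos(θ/2)`, and `c̃, d̃` are real polynomials in `y = sin(θ/2)`
(multiplied by `x` when `l` is even), all of degree at most `l`, with
`a² + b² + c̃² + d̃² = 1`. -/
theorem qsp_product_structure (l : ℕ) (φ : Fin l → ℝ) :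
    ∃ a b c d : Polynomial ℝ,
      a.natDegree ≤ l ∧ b.natDegree ≤ l ∧ c.natDegree ≤ l ∧ d.natDegree ≤ l ∧
      ∀ θ : ℝ,
        letI x : ℝ := Real.cos (θ / 2)
        letI y : ℝ := Real.sin (θ / 2)
        letI cval : ℝ := if Even l then x * c.eval y else c.eval y
        letI dval : ℝ := if Even l then x * d.eval y else d.eval y
        (List.ofFn fun i : Fin l => Rrot (φ i) θ).reverse.prod =
            (((a.eval x : ℝ) : ℂ)) • (1 : Matrix (Fin 2) (Fin 2) ℂ) +
              (Complex.I * ((b.eval x : ℝ) : ℂ)) • PZ +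
              (Complex.I * (cval : ℂ)) • PX +
              (Complex.I * (dval : ℂ)) • PY ∧
          a.eval x ^ 2 + b.eval x ^ 2 + cval ^ 2 + dval ^ 2 = 1 := by
  obtain ⟨A, B, C, D, hA, hB, hC, hD, hU⟩ := exists_qspUnitary_eq_pauliOp φ
  obtain ⟨a, ha, hAa⟩ := exists_natDegree_le_eq_eval_cos hA
  obtain ⟨b, hb, hBb⟩ := exists_natDegree_le_eq_eval_cos hB
  obtain ⟨c, hc, hCc⟩ := exists_natDegree_le_eq_eval_sin hC
  obtain ⟨d, hd, hDd⟩ := exists_natDegree_le_eq_eval_sin hD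
  refine ⟨a, b, c, d, ha, hb, hc, hd, fun θ => ?_⟩
  have hUθ := hU θ
  rw [hAa, hBb, hCc, hDd] at hUθ
  have hdet := det_qspUnitary φ θ
  rw [hUθ, det_pauliOp] at hdet
  exact ⟨hUθ, mod_cast hdet⟩

end
end
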